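/- arXiv:2311.15885 — 2 statements merged into one kernel-verified Lean document; each statement's English description precedes it below -/
import Mathlib

section
/- For every odd k ≥ 3 there is a constant c (depending only on k) such that for every n ≥ 1 there is a sentence φ of L^k over the common signature of 𝒞 and 𝒟 with quantifier depth at most c·n such that 𝒞 ⊨ φ and 𝒟 ⊭ φ, where 𝒞 = 𝒜(𝓕) and 𝒟 = ℬ(𝓕) are the structures built from the chained formula 𝓕 with n links. -/
namespace QVT

/-- A finite relational signature: a finite type of relation symbols, each with an arity. -/
structure Signature : Type 1 where
  symbols : Type
  fin : Fintype symbols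
  arity : symbols → ℕ

/-- A structure over a relational signature. -/
structure Struct (σ : Signature) : Type 1 where
  carrier : Type
  rel : (R : σ.symbols) → (Fin (σ.arity R) → carrier) → Prop

/-- First-order formulas over the signature `σ`, with variables indexed by `ℕ`
(variable `i` represents `x_{i+1}`; variables may be reused and requantified). -/
inductive Fml (σ : Signature) : Type
  | eq : ℕ → ℕ → Fml σ
  | rel : (R : σ.symbols) → (Fin (σ.arity R) → ℕ) → Fml σ
  | not : Fml σ → Fml σ
  | and : Fml σ → Fml σ → Fml σ
  | or : Fml σ → Fml σ → Fml σ
  | ex : ℕ → Fml σ → Fml σ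
  | all : ℕ → Fml σ → Fml σ

namespace Fml

variable {σ : Signature}

/-- Satisfaction of a formula in a structure under a (total) variable assignment. -/
def Sat (M : Struct σ) : (ℕ → M.carrier) → Fml σ → Prop
  | f, .eq i j => f i = f j
  | f, .rel R v => M.rel R fun m => f (v m)
  | f, .not φ => ¬ Sat M f φ
  | f, .and φ ψ => Sat M f φ ∧ Sat M f ψ
  | f, .or φ ψ => Sat M f φ ∨ Sat M f ψ
  | f, .ex i φ => ∃ a : M.carrier, Sat M (Function.update f i a) φ
  | f, .all i φ => ∀ a : M.carrier, Sat M (Function.update f i a) φ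

/-- All variables (free or bound) occurring in a formula. -/
def vars : Fml σ → Finset ℕ
  | .eq i j => {i, j}
  | .rel _ v => Finset.univ.image v
  | .not φ => vars φ
  | .and φ ψ => vars φ ∪ vars ψ
  | .or φ ψ => vars φ ∪ vars ψ
  | .ex i φ => insert i (vars φ)
  | .all i φ => insert i (vars φ)

/-- The free variables of a formula. -/
def freeVars : Fml σ → Finset ℕ
  | .eq i j => {i, j}
  | .rel _ v => Finset.univ.image v
  | .not φ => freeVars φ
  | .and φ ψ => freeVars φ ∪ freeVars ψ
  | .or φ ψ => freeVars φ ∪ freeVars ψ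
  | .ex i φ => (freeVars φ).erase i
  | .all i φ => (freeVars φ).erase i

/-- The number of quantifier occurrences in a formula. -/
def quant : Fml σ → ℕ
  | .eq _ _ => 0
  | .rel _ _ => 0
  | .not φ => quant φ
  | .and φ ψ => quant φ + quant ψ
  | .or φ ψ => quant φ + quant ψ
  | .ex _ φ => quant φ + 1
  | .all _ φ => quant φ + 1

/-- The quantifier depth (quantifier rank) of a formula. -/
def depth : Fml σ → ℕ
  | .eq _ _ => 0
  | .rel _ _ => 0
  | .not φ => depth φ
  | .and φ ψ => max (depth φ) (depth ψ)
  | .or φ ψ => max (depth φ) (depth ψ)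
  | .ex _ φ => depth φ + 1
  | .all _ φ => depth φ + 1

/-- The size (total number of symbols) of a formula. -/
def size : Fml σ → ℕ
  | .eq _ _ => 3
  | .rel R _ => 1 + σ.arity R
  | .not φ => size φ + 1
  | .and φ ψ => size φ + size ψ + 1
  | .or φ ψ => size φ + size ψ + 1
  | .ex _ φ => size φ + 2
  | .all _ φ => size φ + 2

/-- The existential-positive formulas: built from atomic formulas using only
`∧`, `∨` and `∃`. -/
def ExPos : Fml σ → Prop
  | .eq _ _ => True
  | .rel _ _ => True
  | .not _ => False
  | .and φ ψ => ExPos φ ∧ ExPos ψ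
  | .or φ ψ => ExPos φ ∧ ExPos ψ
  | .ex _ φ => ExPos φ
  | .all _ _ => False

end Fml

/-- `φ` is a formula of `L^k`: it only uses the variables `x_1, …, x_k`
(indices `0, …, k-1`). -/
def UsesVars {σ : Signature} (k : ℕ) (φ : Fml σ) : Prop :=
  ∀ i ∈ φ.vars, i < k

/-- A sentence is a formula with no free variables. -/
def IsSentence {σ : Signature} (φ : Fml σ) : Prop := φ.freeVars = ∅

/-- Satisfaction of a sentence (assignment-independent for sentences over
nonempty structures). -/
def SatS {σ : Signature} (M : Struct σ) (φ : Fml σ) : Prop :=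
  ∀ f : ℕ → M.carrier, Fml.Sat M f φ

/-- `φ` distinguishes `A` from `B`: `A ⊨ φ` and `B ⊭ φ`. -/
def Distinguishes {σ : Signature} (A B : Struct σ) (φ : Fml σ) : Prop :=
  SatS A φ ∧ ¬ SatS B φ

/-- `A` and `B` agree on `φ`. -/
def AgreeOn {σ : Signature} (A B : Struct σ) (φ : Fml σ) : Prop :=
  SatS A φ ↔ SatS B φ

/-- A pebbled structure: a structure together with a partial assignment of the
variables to elements. -/
structure Pebbled (σ : Signature) : Type 1 where
  M : Struct σ
  α : ℕ → Option M.carrier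

/-- The domain of the partial assignment of a pebbled structure. -/
def Pebbled.dom {σ : Signature} (P : Pebbled σ) : Set ℕ := {i | P.α i ≠ none}

/-- A `k`-pebbled structure: only the variables `x_1, …, x_k` may be assigned. -/
def Pebbled.IsK {σ : Signature} (k : ℕ) (P : Pebbled σ) : Prop :=
  ∀ i, k ≤ i → P.α i = none

/-- Satisfaction for pebbled structures: `φ` holds under every total extension of
the partial assignment. -/
def PSat {σ : Signature} (P : Pebbled σ) (φ : Fml σ) : Prop :=
  ∀ f : ℕ → P.M.carrier, (∀ i a, P.α i = some a → f i = a) → Fml.Sat P.M f φ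

/-- Two sets of pebbled structures disagree on `φ`: every member of `𝔄`
satisfies `φ` and no member of `𝔅` does. -/
def DisagreeOn {σ : Signature} (𝔄 𝔅 : Set (Pebbled σ)) (φ : Fml σ) : Prop :=
  (∀ P ∈ 𝔄, PSat P φ) ∧ (∀ P ∈ 𝔅, ¬ PSat P φ)

/-- A constraint over variables `V` and group `G`: a tuple of variables together
with a subset `H ⊆ G`. -/
structure Constraint (V G : Type) : Type where
  vars : List V
  H : Set G

/-- A (total) assignment satisfies a constraint if the sum of the values of its
variables lies in `H`. -/
def Constraint.SatBy {V G : Type} [AddCommMonoid G] (C : Constraint V G) (f : V → G) : Prop :=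
  (C.vars.map f).sum ∈ C.H

/-- A partial assignment (a function `f` regarded on the domain `X`) violates no
constraint of `F`: every constraint of `F` all of whose variables lie in `X` is
satisfied. -/
def ViolatesNoClause {V G : Type} [AddCommMonoid G]
    (F : Finset (Constraint V G)) (X : Set V) (f : V → G) : Prop :=
  ∀ C ∈ F, (∀ x ∈ C.vars, x ∈ X) → C.SatBy f

/-- The set of the constraint `C` in `F̂`: its complement if `C` is
distinguishing (i.e. `C ∈ D`), and `C.H` otherwise. -/
def hatH {V G : Type} (D : Set (Constraint V G)) (C : Constraint V G) : Set G :=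
  {g | (C ∈ D → g ∉ C.H) ∧ (C ∉ D → g ∈ C.H)}

/-- `F` (with distinguishing constraints `D`) is a formula over `G` using at most
`k`-ary clauses: each clause is a nonrepeating tuple of at most `k` variables, and
each set appearing in `F̂` is a subgroup of index two. -/
def IsXorFormula {V G : Type} [AddCommGroup G] (k : ℕ)
    (F : Finset (Constraint V G)) (D : Set (Constraint V G)) : Prop :=
  (∀ C ∈ D, C ∈ F) ∧
  ∀ C ∈ F, C.vars.Nodup ∧ C.vars.length ≤ k ∧
    ∃ H' : AddSubgroup G, hatH D C = ↑H' ∧ H'.index = 2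

/-- The common signature of the structures `𝒜(F)` and `ℬ(F)`: a unary relation
symbol `R_x` for each variable `x` and an `m`-ary relation symbol `R_C` for each
constraint `C ∈ F` on `m` variables. -/
@[reducible] def xorSig (V G : Type) [Fintype V] [Fintype G]
    (F : Finset (Constraint V G)) : Signature where
  symbols := V ⊕ {C : Constraint V G // C ∈ F}
  fin := inferInstance
  arity := fun s => match s with
    | Sum.inl _ => 1
    | Sum.inr C => C.1.vars.length

/-- The structure with domain `V × G` (the element `x^g` is the pair `(x,g)`),
where the relation of the constraint `C` is interpreted using the set `Hf C`. -/
@[reducible] def mkXorStruct (V G : Type) [Fintype V] [Fintype G] [AddCommMonoid G]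
    (F : Finset (Constraint V G)) (Hf : Constraint V G → Set G) :
    Struct (xorSig V G F) where
  carrier := V × G
  rel := fun R => match R with
    | Sum.inl x => fun t => (t 0).1 = x
    | Sum.inr C => fun t => (∀ i, (t i).1 = C.1.vars.get i) ∧ (∑ i, (t i).2) ∈ Hf C.1

/-- The structure `𝒜(F) = X(F̂)` (with relations renamed to the common signature). -/
@[reducible] def Astruct (V G : Type) [Fintype V] [Fintype G] [AddCommMonoid G]
    (F : Finset (Constraint V G)) (D : Set (Constraint V G)) : Struct (xorSig V G F) :=
  mkXorStruct V G F (hatH D)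

/-- The structure `ℬ(F) = X(F)`. -/
@[reducible] def Bstruct (V G : Type) [Fintype V] [Fintype G] [AddCommMonoid G]
    (F : Finset (Constraint V G)) : Struct (xorSig V G F) :=
  mkXorStruct V G F (fun C => C.H)

/-- An isomorphism between two structures over a common signature: a bijection of
the domains preserving all relations in both directions. -/
def Isomorphic {σ : Signature} (A B : Struct σ) : Prop :=
  ∃ e : A.carrier ≃ B.carrier,
    ∀ (R : σ.symbols) (t : Fin (σ.arity R) → A.carrier),
      A.rel R t ↔ B.rel R (fun i => e (t i))

/-- `m : Y → B(F)` (with `Y ⊆ A(F) = V × G`) is assignment defining: it respects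
the first (variable) component, and `|m y| + |y|` depends only on `π y`. -/
def AssignDefining {V G : Type} [AddCommMonoid G] (Y : Set (V × G)) (m : Y → V × G) : Prop :=
  (∀ y : Y, (m y).1 = (y : V × G).1) ∧
  ∀ y z : Y, (y : V × G).1 = (z : V × G).1 →
    (m y).2 + (y : V × G).2 = (m z).2 + (z : V × G).2

/-- `m : Y → B.carrier` (with `Y ⊆ A.carrier`) is a partial isomorphism: it is
injective and preserves all relations in both directions. -/
def PartialIsoMap {σ : Signature} (A B : Struct σ) (Y : Set A.carrier)
    (m : Y → B.carrier) : Prop :=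
  Function.Injective m ∧
  ∀ (R : σ.symbols) (t : Fin (σ.arity R) → Y),
    A.rel R (fun i => (t i : A.carrier)) ↔ B.rel R (fun i => m (t i))

/-- The group `Z_2^k`. -/
abbrev Gk (k : ℕ) : Type := Fin k → ZMod 2

/-- The variable set `V = {s_1, …, s_k, e_1, …, e_k}`: `Sum.inl i` is `s_{i+1}`
and `Sum.inr ℓ` is `e_{ℓ+1}`. -/
abbrev Vk (k : ℕ) : Type := Fin k ⊕ Fin k

/-- The elements of `Z_2^k` whose coordinates sum to `0`. -/
def EVEN (k : ℕ) : Set (Gk k) := {g | ∑ i, g i = 0}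

/-- The elements of `Z_2^k` whose coordinates sum to `1`. -/
def ODD (k : ℕ) : Set (Gk k) := {g | ∑ i, g i = 1}

open scoped Classical in
/-- The formula `F` over `Z_2^k` from Section 5: clauses `s_1 ∈ ODD`;
`s_i ∈ EVEN` for `i ≠ 1`; `(e_ℓ + Σ_{i≠ℓ} s_i)[ℓ] = 0`; `s_i[i] = 0`;
`e_ℓ[i] = 0`. -/
noncomputable def baseF (k : ℕ) (hk : 0 < k) : Finset (Constraint (Vk k) (Gk k)) :=
  {⟨[Sum.inl ⟨0, hk⟩], ODD k⟩}
  ∪ (Finset.univ.filter (fun i : Fin k => i ≠ ⟨0, hk⟩)).image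
      (fun i : Fin k => ⟨[Sum.inl i], EVEN k⟩)
  ∪ Finset.univ.image (fun ℓ : Fin k =>
      ⟨Sum.inr ℓ :: (Finset.univ.erase ℓ).toList.map Sum.inl, {g : Gk k | g ℓ = 0}⟩)
  ∪ Finset.univ.image (fun i : Fin k => ⟨[Sum.inl i], {g : Gk k | g i = 0}⟩)
  ∪ Finset.univ.image (fun p : Fin k × Fin k => ⟨[Sum.inr p.1], {g : Gk k | g p.2 = 0}⟩)

/-- The set of distinguishing clauses of `baseF`: just `s_1 ∈ ODD`. -/
def baseD (k : ℕ) (hk : 0 < k) : Set (Constraint (Vk k) (Gk k)) :=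
  {⟨[Sum.inl ⟨0, hk⟩], ODD k⟩}

/-- `j+1` as an element of `Fin n` (junk value `j` if `j` is the last index). -/
def succIdx {n : ℕ} (j : Fin n) : Fin n := if h : j.1 + 1 < n then ⟨j.1 + 1, h⟩ else j

open scoped Classical in
/-- The chained formula `𝓕` with `n` links: the variable `x(i)` is the pair
`(i, x)`.  It consists of the clauses of the `n` copies of `baseF`, except that
`s_1(i) ∈ ODD` is kept only for `i = 1` and `e_ℓ(i)[ℓ] = 0` only for `i = n`,
together with the linking clauses `e_ℓ(i) + s_1(i+1) ∈ EVEN` for `i ∈ [n-1]`. -/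
noncomputable def chainF (k n : ℕ) (hk : 0 < k) (hn : 0 < n) :
    Finset (Constraint (Fin n × Vk k) (Gk k)) :=
  {⟨[((⟨0, hn⟩ : Fin n), Sum.inl ⟨0, hk⟩)], ODD k⟩}
  ∪ (Finset.univ.filter (fun p : Fin n × Fin k => p.2 ≠ ⟨0, hk⟩)).image
      (fun p : Fin n × Fin k => ⟨[(p.1, Sum.inl p.2)], EVEN k⟩)
  ∪ Finset.univ.image (fun p : Fin n × Fin k =>
      ⟨(p.1, Sum.inr p.2) ::
          (Finset.univ.erase p.2).toList.map (fun i : Fin k => (p.1, Sum.inl i)),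
        {g : Gk k | g p.2 = 0}⟩)
  ∪ Finset.univ.image (fun p : Fin n × Fin k =>
      ⟨[(p.1, Sum.inl p.2)], {g : Gk k | g p.2 = 0}⟩)
  ∪ ((Finset.univ : Finset (Fin n × Fin k × Fin k)).filter
        (fun p => p.2.2 ≠ p.2.1 ∨ p.1 = (⟨n - 1, by omega⟩ : Fin n))).image
      (fun p : Fin n × Fin k × Fin k =>
        ⟨[(p.1, Sum.inr p.2.1)], {g : Gk k | g p.2.2 = 0}⟩)
  ∪ ((Finset.univ : Finset (Fin n × Fin k)).filter (fun p => p.1.1 + 1 < n)).image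
      (fun p : Fin n × Fin k =>
        ⟨[(p.1, Sum.inr p.2), (succIdx p.1, Sum.inl ⟨0, hk⟩)], EVEN k⟩)

/-- The set of distinguishing clauses of `chainF`: just `s_1(1) ∈ ODD`. -/
def chainD (k n : ℕ) (hk : 0 < k) (hn : 0 < n) : Set (Constraint (Fin n × Vk k) (Gk k)) :=
  {⟨[((⟨0, hn⟩ : Fin n), Sum.inl ⟨0, hk⟩)], ODD k⟩}


section Infra

variable {σ : Signature}

/-- Conjunction of a list of formulas, with a trivial filler using variable `v`. -/
def conjL (v : ℕ) (l : List (Fml σ)) : Fml σ := l.foldr .and (.eq v v)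

/-- Block of existential quantifiers over the variables in `l`. -/
def exsL (l : List ℕ) (φ : Fml σ) : Fml σ := l.foldr .ex φ

lemma sat_conjL {M : Struct σ} {f : ℕ → M.carrier} {v : ℕ} {l : List (Fml σ)} :
    Fml.Sat M f (conjL v l) ↔ ∀ φ ∈ l, Fml.Sat M f φ := by
  induction l with
  | nil => simp [conjL, Fml.Sat]
  | cons a l ih =>
      simp only [conjL, List.foldr_cons] at *
      constructor
      · rintro ⟨h1, h2⟩ φ hφ
        rcases List.mem_cons.mp hφ with rfl | hφ
        · exact h1
        · exact ih.mp h2 φ hφ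
      · intro h
        exact ⟨h a (by simp), ih.mpr fun φ hφ => h φ (by simp [hφ])⟩

lemma sat_exsL {M : Struct σ} {f : ℕ → M.carrier} {l : List ℕ} {φ : Fml σ} :
    Fml.Sat M f (exsL l φ) ↔ ∃ g : ℕ → M.carrier, (∀ i, i ∉ l → g i = f i) ∧ Fml.Sat M g φ := by
  induction l generalizing f with
  | nil =>
      simp only [exsL, List.foldr_nil]
      constructor
      · intro h; exact ⟨f, fun i _ => rfl, h⟩
      · rintro ⟨g, hg, h⟩
        have : g = f := funext fun i => hg i (by simp)
        rwa [this] at h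
  | cons a l ih =>
      simp only [exsL, List.foldr_cons] at *
      constructor
      · rintro ⟨x, hx⟩
        obtain ⟨g, hg, h⟩ := ih.mp hx
        refine ⟨g, fun i hi => ?_, h⟩
        rcases eq_or_ne i a with rfl | hia
        · simp at hi
        · rw [hg i (by simp at hi; tauto), Function.update_of_ne hia]
      · rintro ⟨g, hg, h⟩
        refine ⟨g a, ih.mpr ⟨g, fun i hi => ?_, h⟩⟩
        rcases eq_or_ne i a with rfl | hia
        · simp
        · rw [Function.update_of_ne hia]
          exact hg i (by simp [hi, hia])

lemma mem_vars_conjL {v i : ℕ} {l : List (Fml σ)} (h : i ∈ (conjL v l).vars) :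
    i = v ∨ ∃ φ ∈ l, i ∈ φ.vars := by
  induction l with
  | nil => simp [conjL, Fml.vars] at h; tauto
  | cons a l ih =>
      simp only [conjL, List.foldr_cons, Fml.vars, Finset.mem_union] at h
      rcases h with h | h
      · exact Or.inr ⟨a, by simp, h⟩
      · rcases ih h with h | ⟨φ, hφ, hi⟩
        · exact Or.inl h
        · exact Or.inr ⟨φ, by simp [hφ], hi⟩

lemma mem_vars_exsL {i : ℕ} {l : List ℕ} {φ : Fml σ} (h : i ∈ (exsL l φ).vars) :
    i ∈ l ∨ i ∈ φ.vars := by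
  induction l with
  | nil => exact Or.inr (by simpa [exsL] using h)
  | cons a l ih =>
      simp only [exsL, List.foldr_cons, Fml.vars, Finset.mem_insert] at h
      rcases h with rfl | h
      · simp
      · rcases ih h with h | h
        · exact Or.inl (by simp [h])
        · exact Or.inr h

lemma freeVars_subset_vars (φ : Fml σ) : φ.freeVars ⊆ φ.vars := by
  induction φ with
  | eq i j => simp [Fml.freeVars, Fml.vars]
  | rel R t => simp [Fml.freeVars, Fml.vars]
  | not φ ih => simpa [Fml.freeVars, Fml.vars] using ih
  | and φ ψ ih1 ih2 => simp only [Fml.freeVars, Fml.vars]; exact Finset.union_subset_union ih1 ih2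
  | or φ ψ ih1 ih2 => simp only [Fml.freeVars, Fml.vars]; exact Finset.union_subset_union ih1 ih2
  | ex i φ ih =>
      simp only [Fml.freeVars, Fml.vars]
      exact (Finset.erase_subset _ _).trans (ih.trans (Finset.subset_insert _ _))
  | all i φ ih =>
      simp only [Fml.freeVars, Fml.vars]
      exact (Finset.erase_subset _ _).trans (ih.trans (Finset.subset_insert _ _))

lemma mem_freeVars_exsL {i : ℕ} {l : List ℕ} {φ : Fml σ} (h : i ∈ (exsL l φ).freeVars) :
    i ∈ φ.freeVars ∧ i ∉ l := by
  induction l with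
  | nil => simpa [exsL] using h
  | cons a l ih =>
      simp only [exsL, List.foldr_cons, Fml.freeVars] at h
      obtain ⟨hmem, hne⟩ := Finset.mem_erase.mp h |>.symm
      have := ih (Finset.mem_erase.mp h).2
      refine ⟨this.1, ?_⟩
      simp only [List.mem_cons, not_or]
      exact ⟨(Finset.mem_erase.mp h).1, this.2⟩

lemma depth_conjL_le {v : ℕ} {l : List (Fml σ)} {d : ℕ} (h : ∀ φ ∈ l, φ.depth ≤ d) :
    (conjL v l).depth ≤ d := by
  induction l with
  | nil => simp [conjL, Fml.depth]
  | cons a l ih =>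
      simp only [conjL, List.foldr_cons, Fml.depth, max_le_iff]
      exact ⟨h a (by simp), ih fun φ hφ => h φ (by simp [hφ])⟩

lemma depth_exsL {l : List ℕ} {φ : Fml σ} : (exsL l φ).depth = l.length + φ.depth := by
  induction l with
  | nil => simp [exsL]
  | cons a l ih => simp [exsL, Fml.depth] at *; omega

/-- Sum over the indices of a list. -/
lemma sum_fin_get {α M : Type*} [AddCommMonoid M] (l : List α) (g : α → M) :
    (∑ m : Fin l.length, g (l.get m)) = (l.map g).sum := by
  conv_rhs => rw [← List.ofFn_get l]
  rw [List.map_ofFn, List.sum_ofFn]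
  rfl

lemma forall_fin_get {α : Type*} (l : List α) (p : α → Prop) :
    (∀ m : Fin l.length, p (l.get m)) ↔ ∀ w ∈ l, p w := by
  constructor
  · intro h w hw
    obtain ⟨m, rfl⟩ := List.get_of_mem hw
    exact h m
  · intro h m; exact h _ (l.get_mem _)

end Infra


section S16

lemma sum_map_toList {β M : Type*} [AddCommMonoid M] (s : Finset β) (q : β → M) :
    (s.toList.map q).sum = ∑ i ∈ s, q i := by
  rw [Finset.sum, ← Finset.coe_toList s, Multiset.map_coe, Multiset.sum_coe]

variable (k n : ℕ) (hk : 0 < k) (hn : 0 < n)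

/-- `s_1` as an element of `Fin k`. -/
def i0 : Fin k := ⟨0, hk⟩

def CC0 : Constraint (Fin n × Vk k) (Gk k) :=
  ⟨[((⟨0, hn⟩ : Fin n), Sum.inl (i0 k hk))], ODD k⟩

def Cev (j : Fin n) (i : Fin k) : Constraint (Fin n × Vk k) (Gk k) :=
  ⟨[(j, Sum.inl i)], EVEN k⟩

def CuS (j : Fin n) (i : Fin k) : Constraint (Fin n × Vk k) (Gk k) :=
  ⟨[(j, Sum.inl i)], {g : Gk k | g i = 0}⟩

def CuE (j : Fin n) (ℓ i : Fin k) : Constraint (Fin n × Vk k) (Gk k) :=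
  ⟨[(j, Sum.inr ℓ)], {g : Gk k | g i = 0}⟩

noncomputable def Cbig (j : Fin n) (ℓ : Fin k) : Constraint (Fin n × Vk k) (Gk k) :=
  ⟨(j, Sum.inr ℓ) :: (Finset.univ.erase ℓ).toList.map (fun i : Fin k => (j, Sum.inl i)),
    {g : Gk k | g ℓ = 0}⟩

def Clink (j : Fin n) (ℓ : Fin k) : Constraint (Fin n × Vk k) (Gk k) :=
  ⟨[(j, Sum.inr ℓ), (succIdx j, Sum.inl ⟨0, hk⟩)], EVEN k⟩

lemma memF_CC0 : CC0 k n hk hn ∈ chainF k n hk hn := by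
  classical
  unfold chainF
  refine Finset.mem_union_left _ (Finset.mem_union_left _ (Finset.mem_union_left _
    (Finset.mem_union_left _ (Finset.mem_union_left _ ?_))))
  exact Finset.mem_singleton_self _

lemma memF_Cev {j : Fin n} {i : Fin k} (hi : i ≠ ⟨0, hk⟩) :
    Cev k n j i ∈ chainF k n hk hn := by
  classical
  unfold chainF
  refine Finset.mem_union_left _ (Finset.mem_union_left _ (Finset.mem_union_left _
    (Finset.mem_union_left _ (Finset.mem_union_right _ ?_))))
  exact Finset.mem_image.mpr ⟨(j, i), Finset.mem_filter.mpr ⟨Finset.mem_univ _, hi⟩, rfl⟩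

lemma memF_Cbig (j : Fin n) (ℓ : Fin k) : Cbig k n j ℓ ∈ chainF k n hk hn := by
  classical
  unfold chainF
  refine Finset.mem_union_left _ (Finset.mem_union_left _ (Finset.mem_union_left _
    (Finset.mem_union_right _ ?_)))
  exact Finset.mem_image.mpr ⟨(j, ℓ), Finset.mem_univ _, rfl⟩

lemma memF_CuS (j : Fin n) (i : Fin k) : CuS k n j i ∈ chainF k n hk hn := by
  classical
  unfold chainF
  refine Finset.mem_union_left _ (Finset.mem_union_left _ (Finset.mem_union_right _ ?_))
  exact Finset.mem_image.mpr ⟨(j, i), Finset.mem_univ _, rfl⟩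

lemma memF_CuE {j : Fin n} {ℓ i : Fin k} (h : i ≠ ℓ ∨ j = (⟨n - 1, by omega⟩ : Fin n)) :
    CuE k n j ℓ i ∈ chainF k n hk hn := by
  classical
  unfold chainF
  refine Finset.mem_union_left _ (Finset.mem_union_right _ ?_)
  exact Finset.mem_image.mpr ⟨(j, ℓ, i), Finset.mem_filter.mpr ⟨Finset.mem_univ _, h⟩, rfl⟩

lemma memF_Clink {j : Fin n} (ℓ : Fin k) (h : j.1 + 1 < n) :
    Clink k n hk j ℓ ∈ chainF k n hk hn := by
  classical
  unfold chainF
  refine Finset.mem_union_right _ ?_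
  exact Finset.mem_image.mpr ⟨(j, ℓ), Finset.mem_filter.mpr ⟨Finset.mem_univ _, h⟩, rfl⟩

lemma zero_not_odd : (0 : Gk k) ∉ ODD k := by
  simp [ODD]

lemma ODD_ne_coord (i : Fin k) : ({g : Gk k | g i = 0} : Set (Gk k)) ≠ ODD k := by
  intro h
  have h0 : (0 : Gk k) ∈ ({g : Gk k | g i = 0} : Set (Gk k)) := by simp
  rw [h] at h0
  exact zero_not_odd k h0

lemma ODD_ne_EVEN : (EVEN k : Set (Gk k)) ≠ ODD k := by
  intro h
  have h0 : (0 : Gk k) ∈ EVEN k := by simp [EVEN]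
  rw [h] at h0
  exact zero_not_odd k h0

lemma hatH_of_ne {C : Constraint (Fin n × Vk k) (Gk k)} (hC : C.H ≠ ODD k) :
    hatH (chainD k n hk hn) C = C.H := by
  have hCD : C ∉ chainD k n hk hn := by
    intro h
    rw [chainD, Set.mem_singleton_iff] at h
    exact hC (congrArg Constraint.H h)
  ext g
  simp [hatH, hCD]

lemma hatH_CC0 : hatH (chainD k n hk hn) (CC0 k n hk hn) = {g : Gk k | g ∉ ODD k} := by
  have hCD : CC0 k n hk hn ∈ chainD k n hk hn := by
    rw [chainD, Set.mem_singleton_iff]; rfl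
  ext g
  simp only [hatH, Set.mem_setOf_eq]
  constructor
  · intro h; exact h.1 hCD
  · intro h; exact ⟨fun _ => h, fun hc => absurd hCD hc⟩

open scoped Classical in
/-- Atomic formula asserting the relation of clause `C` on the tuple of
variables given by `μ` (junk `d = d` if `C ∉ F`). -/
noncomputable def atomF (d : ℕ) (C : Constraint (Fin n × Vk k) (Gk k))
    (μ : Fin n × Vk k → ℕ) : Fml (xorSig (Fin n × Vk k) (Gk k) (chainF k n hk hn)) :=
  if h : C ∈ chainF k n hk hn then .rel (Sum.inr ⟨C, h⟩) (fun m => μ (C.vars.get m))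
  else .eq d d

lemma sat_atomF {Hf : Constraint (Fin n × Vk k) (Gk k) → Set (Gk k)}
    {f : ℕ → (Fin n × Vk k) × Gk k} {d : ℕ} {C : Constraint (Fin n × Vk k) (Gk k)}
    {μ : Fin n × Vk k → ℕ} (hC : C ∈ chainF k n hk hn) :
    Fml.Sat (mkXorStruct (Fin n × Vk k) (Gk k) (chainF k n hk hn) Hf) f
        (atomF k n hk hn d C μ) ↔
      (∀ w ∈ C.vars, (f (μ w)).1 = w) ∧
        (C.vars.map (fun w => (f (μ w)).2)).sum ∈ Hf C := by
  rw [atomF, dif_pos hC]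
  show ((∀ m : Fin C.vars.length, (f (μ (C.vars.get m))).1 = C.vars.get m) ∧
      (∑ m : Fin C.vars.length, (f (μ (C.vars.get m))).2) ∈ Hf C) ↔ _
  rw [forall_fin_get C.vars (fun w => (f (μ w)).1 = w),
    sum_fin_get C.vars (fun w => (f (μ w)).2)]

end S16


section S16b

variable (k n : ℕ) (hk : 0 < k) (hn : 0 < n)

/-- The variable slot assigned to `s_{i+1}`: swaps `0` and `v`. -/
def μv (v : ℕ) (i : Fin k) : ℕ := if i.1 = 0 then v else if i.1 = v then 0 else i.1

lemma μv_lt {v : ℕ} (hv : v < k) (i : Fin k) : μv k v i < k := by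
  have := i.2; unfold μv; split_ifs <;> omega

lemma μv_inj {v : ℕ} {i i' : Fin k} (h : μv k v i = μv k v i') : i = i' := by
  apply Fin.ext
  have h2 := i.2; have h3 := i'.2
  revert h; unfold μv; split_ifs <;> omega

lemma μv_zero (v : ℕ) : μv k v (⟨0, hk⟩ : Fin k) = v := by simp [μv]

/-- Inverse of `μv` (junk outside `[0,k)`). -/
def ιv (v : ℕ) (hv : v < k) (s : ℕ) : Fin k :=
  if s = 0 then ⟨v, hv⟩
  else if h : s < k then (if s = v then ⟨0, hk⟩ else ⟨s, h⟩)
  else ⟨0, hk⟩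

lemma ιv_μv {v : ℕ} (hv : v < k) (i : Fin k) : ιv k hk v hv (μv k v i) = i := by
  apply Fin.ext
  have h2 := i.2
  unfold ιv μv
  split_ifs <;> simp_all <;> omega

def jIdx (r : ℕ) : Fin n := ⟨n - 1 - r, by have := hn; omega⟩

def slotsL (v : ℕ) : List ℕ := (List.range k).filter (fun s => s ≠ v)

lemma mem_slotsL {v s : ℕ} : s ∈ slotsL k v ↔ s < k ∧ s ≠ v := by
  simp [slotsL]

noncomputable def sPart (j : Fin n) (v : ℕ) :
    Fml (xorSig (Fin n × Vk k) (Gk k) (chainF k n hk hn)) :=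
  conjL v (((List.finRange k).filter (fun i => i.1 ≠ 0)).map (fun i =>
    .and (atomF k n hk hn (μv k v i) (Cev k n j i) (fun _ => μv k v i))
      (atomF k n hk hn (μv k v i) (CuS k n j i) (fun _ => μv k v i))))

def bigμ (v m : ℕ) : Fin n × Vk k → ℕ :=
  fun w => match w.2 with | Sum.inl i => μv k v i | Sum.inr _ => m

def linkμ (m m' : ℕ) : Fin n × Vk k → ℕ :=
  fun w => match w.2 with | Sum.inl _ => m' | Sum.inr _ => m

noncomputable def clauseF (j : Fin n) (v : ℕ)
    (tail : Fin k → ℕ → Fml (xorSig (Fin n × Vk k) (Gk k) (chainF k n hk hn))) :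
    Fml (xorSig (Fin n × Vk k) (Gk k) (chainF k n hk hn)) :=
  conjL v ((List.finRange k).map (fun ℓ =>
    .ex (μv k v ℓ) (.and (.and
      (conjL (μv k v ℓ) (((List.finRange k).filter (fun i => i ≠ ℓ)).map (fun i =>
        atomF k n hk hn (μv k v ℓ) (CuE k n j ℓ i) (fun _ => μv k v ℓ))))
      (atomF k n hk hn (μv k v ℓ) (Cbig k n j ℓ) (bigμ k n v (μv k v ℓ))))
      (tail ℓ (μv k v ℓ)))))

noncomputable def EvenF : ℕ → ℕ → Fml (xorSig (Fin n × Vk k) (Gk k) (chainF k n hk hn))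
  | 0, v => .and (atomF k n hk hn v (CuS k n (jIdx k n hn 0) ⟨0, hk⟩) (fun _ => v))
      (exsL (slotsL k v) (.and (sPart k n hk hn (jIdx k n hn 0) v)
        (clauseF k n hk hn (jIdx k n hn 0) v (fun ℓ m =>
          atomF k n hk hn m (CuE k n (jIdx k n hn 0) ℓ ℓ) (fun _ => m)))))
  | r+1, v => .and (atomF k n hk hn v (CuS k n (jIdx k n hn (r+1)) ⟨0, hk⟩) (fun _ => v))
      (exsL (slotsL k v) (.and (sPart k n hk hn (jIdx k n hn (r+1)) v)
        (clauseF k n hk hn (jIdx k n hn (r+1)) v (fun ℓ m =>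
          .ex (if m = 0 then 1 else 0)
            (.and (atomF k n hk hn m (Clink k n hk (jIdx k n hn (r+1)) ℓ)
                (linkμ k n m (if m = 0 then 1 else 0)))
              (EvenF r (if m = 0 then 1 else 0)))))))

noncomputable def phiF : Fml (xorSig (Fin n × Vk k) (Gk k) (chainF k n hk hn)) :=
  .ex 0 (.and (atomF k n hk hn 0 (CC0 k n hk hn) (fun _ => 0)) (EvenF k n hk hn (n-1) 0))

end S16b


section S16c

variable (k n : ℕ) (hk : 0 < k) (hn : 0 < n)
variable {Hf : Constraint (Fin n × Vk k) (Gk k) → Set (Gk k)}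

local notation "MM" => mkXorStruct (Fin n × Vk k) (Gk k) (chainF k n hk hn) Hf

variable (hHf : ∀ C ∈ chainF k n hk hn, C.H ≠ ODD k → Hf C = C.H)

include hHf

lemma sat_CuS {f : ℕ → (Fin n × Vk k) × Gk k} {d v' : ℕ} {j : Fin n} {i : Fin k} :
    Fml.Sat MM f (atomF k n hk hn d (CuS k n j i) (fun _ => v')) ↔
      ((f v').1 = (j, Sum.inl i) ∧ (f v').2 i = 0) := by
  rw [sat_atomF k n hk hn (memF_CuS k n hk hn j i),
    hHf _ (memF_CuS k n hk hn j i) (ODD_ne_coord k i)]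
  simp [CuS]

lemma sat_Cev {f : ℕ → (Fin n × Vk k) × Gk k} {d v' : ℕ} {j : Fin n} {i : Fin k}
    (hi : i ≠ ⟨0, hk⟩) :
    Fml.Sat MM f (atomF k n hk hn d (Cev k n j i) (fun _ => v')) ↔
      ((f v').1 = (j, Sum.inl i) ∧ (∑ m, (f v').2 m) = 0) := by
  rw [sat_atomF k n hk hn (memF_Cev k n hk hn hi),
    hHf _ (memF_Cev k n hk hn hi) (ODD_ne_EVEN k)]
  simp [Cev, EVEN]

lemma sat_CuE {f : ℕ → (Fin n × Vk k) × Gk k} {d v' : ℕ} {j : Fin n} {ℓ i : Fin k}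
    (h : i ≠ ℓ ∨ j = (⟨n - 1, by omega⟩ : Fin n)) :
    Fml.Sat MM f (atomF k n hk hn d (CuE k n j ℓ i) (fun _ => v')) ↔
      ((f v').1 = (j, Sum.inr ℓ) ∧ (f v').2 i = 0) := by
  rw [sat_atomF k n hk hn (memF_CuE k n hk hn h),
    hHf _ (memF_CuE k n hk hn h) (ODD_ne_coord k i)]
  simp [CuE]

lemma sat_Clink {f : ℕ → (Fin n × Vk k) × Gk k} {d m m' : ℕ} {j : Fin n} {ℓ : Fin k}
    (h : j.1 + 1 < n) :
    Fml.Sat MM f (atomF k n hk hn d (Clink k n hk j ℓ) (linkμ k n m m')) ↔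
      ((f m).1 = (j, Sum.inr ℓ) ∧ (f m').1 = (succIdx j, Sum.inl ⟨0, hk⟩) ∧
        (∑ i, ((f m).2 + (f m').2) i) = 0) := by
  rw [sat_atomF k n hk hn (memF_Clink k n hk hn ℓ h),
    hHf _ (memF_Clink k n hk hn ℓ h) (ODD_ne_EVEN k)]
  simp [Clink, EVEN, linkμ, and_assoc]

lemma sat_Cbig {f : ℕ → (Fin n × Vk k) × Gk k} {d v m : ℕ} {j : Fin n} {ℓ : Fin k} :
    Fml.Sat MM f (atomF k n hk hn d (Cbig k n j ℓ) (bigμ k n v m)) ↔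
      ((f m).1 = (j, Sum.inr ℓ) ∧
        (∀ i ∈ Finset.univ.erase ℓ, (f (μv k v i)).1 = (j, Sum.inl i)) ∧
        ((f m).2 + ∑ i ∈ Finset.univ.erase ℓ, (f (μv k v i)).2) ℓ = 0) := by
  rw [sat_atomF k n hk hn (memF_Cbig k n hk hn j ℓ),
    hHf _ (memF_Cbig k n hk hn j ℓ) (ODD_ne_coord k ℓ)]
  constructor
  · rintro ⟨h1, h2⟩
    refine ⟨?_, fun i hi => ?_, ?_⟩
    · simpa [Cbig, bigμ] using h1 _ (by simp [Cbig] : ((j, Sum.inr ℓ) : Fin n × Vk k) ∈ (Cbig k n j ℓ).vars)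
    · have : ((j, Sum.inl i) : Fin n × Vk k) ∈ (Cbig k n j ℓ).vars := by
        simp only [Cbig, List.mem_cons, List.mem_map]
        exact Or.inr ⟨i, by rw [Finset.mem_toList]; exact hi, rfl⟩
      simpa [bigμ] using h1 _ this
    · have hs : ((Cbig k n j ℓ).vars.map (fun w => (f (bigμ k n v m w)).2)).sum
          = (f m).2 + ∑ i ∈ Finset.univ.erase ℓ, (f (μv k v i)).2 := by
        simp only [Cbig, List.map_cons, List.sum_cons, List.map_map]
        congr 1
        exact sum_map_toList _ _
      rw [hs] at h2
      simpa [Cbig] using h2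
  · rintro ⟨h1, h2, h3⟩
    constructor
    · intro w hw
      simp only [Cbig, List.mem_cons, List.mem_map] at hw
      rcases hw with rfl | ⟨i, hi, rfl⟩
      · simpa [bigμ] using h1
      · have hi' : i ∈ Finset.univ.erase ℓ := by
          rw [← Finset.mem_toList]; exact hi
        simpa [bigμ] using h2 i hi'
    · have hs : ((Cbig k n j ℓ).vars.map (fun w => (f (bigμ k n v m w)).2)).sum
          = (f m).2 + ∑ i ∈ Finset.univ.erase ℓ, (f (μv k v i)).2 := by
        simp only [Cbig, List.map_cons, List.sum_cons, List.map_map]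
        congr 1
        exact sum_map_toList _ _
      rw [hs]
      simpa [Cbig] using h3

end S16c


section S16d

variable (k n : ℕ) (hk : 0 < k) (hn : 0 < n)

lemma μv_ne_v {v : ℕ} {i : Fin k} (hi : i.1 ≠ 0) : μv k v i ≠ v := by
  have := i.2
  unfold μv; split_ifs <;> omega

lemma mprime_ne {m : ℕ} : (if m = 0 then 1 else 0) ≠ m := by split_ifs <;> omega

lemma succIdx_jIdx {r : ℕ} (hr : r + 1 ≤ n - 1) :
    succIdx (jIdx k n hn (r+1)) = jIdx k n hn r := by
  have h2 : (jIdx k n hn (r+1)).1 + 1 < n := by simp [jIdx]; omega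
  rw [succIdx, dif_pos h2]
  apply Fin.ext
  simp [jIdx]
  omega

lemma jIdx_succ_lt {r : ℕ} (hr : r + 1 ≤ n - 1) : (jIdx k n hn (r+1)).1 + 1 < n := by
  simp [jIdx]; omega

/-- Canonical all-zero witness for the existential block. -/
noncomputable def gz (v : ℕ) (hv : v < k) (j : Fin n) (f : ℕ → (Fin n × Vk k) × Gk k) :
    ℕ → (Fin n × Vk k) × Gk k :=
  fun s => if s ∈ slotsL k v then ((j, Sum.inl (ιv k hk v hv s)), (0 : Gk k)) else f s

lemma gz_off {v : ℕ} (hv : v < k) (j : Fin n) (f : ℕ → (Fin n × Vk k) × Gk k)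
    {s : ℕ} (hs : s ∉ slotsL k v) : gz k n hk v hv j f s = f s := by
  simp [gz, hs]

lemma gz_at {v : ℕ} (hv : v < k) {j : Fin n} {f : ℕ → (Fin n × Vk k) × Gk k}
    (hf : f v = ((j, Sum.inl (⟨0, hk⟩ : Fin k)), (0 : Gk k))) (i : Fin k) :
    gz k n hk v hv j f (μv k v i) = ((j, Sum.inl i), (0 : Gk k)) := by
  rcases eq_or_ne i.1 0 with h0 | h0
  · have hi : i = (⟨0, hk⟩ : Fin k) := Fin.ext h0
    have : μv k v i = v := by rw [hi]; exact μv_zero k hk v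
    rw [this, gz_off k n hk hv j f (by simp [mem_slotsL]), hf, hi]
  · have hmem : μv k v i ∈ slotsL k v :=
      (mem_slotsL k).mpr ⟨μv_lt k hv i, μv_ne_v k h0⟩
    simp only [gz, if_pos hmem]
    rw [ιv_μv k hk hv i]

variable {Hf : Constraint (Fin n × Vk k) (Gk k) → Set (Gk k)}
variable (hHf : ∀ C ∈ chainF k n hk hn, C.H ≠ ODD k → Hf C = C.H)

include hHf

lemma zeroSat (hk3 : 3 ≤ k) :
    ∀ r, r ≤ n - 1 → ∀ v, v < 2 → ∀ f : ℕ → (Fin n × Vk k) × Gk k,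
    f v = ((jIdx k n hn r, Sum.inl (⟨0, hk⟩ : Fin k)), (0 : Gk k)) →
    Fml.Sat (mkXorStruct (Fin n × Vk k) (Gk k) (chainF k n hk hn) Hf) f
      (EvenF k n hk hn r v) := by
  intro r
  induction r with
  | zero =>
      intro _ v hv f hf
      have hvk : v < k := by omega
      set j := jIdx k n hn 0 with hj
      refine ⟨?_, ?_⟩
      · rw [sat_CuS k n hk hn hHf, hf]
        exact ⟨rfl, rfl⟩
      · refine sat_exsL.mpr ⟨gz k n hk v hvk j f, fun s hs => gz_off k n hk hvk j f hs, ?_, ?_⟩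
        · -- sPart
          refine sat_conjL.mpr ?_
          intro φ hφ
          simp only [List.mem_map, List.mem_filter, List.mem_finRange, true_and] at hφ
          obtain ⟨i, hi0, rfl⟩ := hφ
          have hi0' : i.1 ≠ 0 := by simpa using hi0
          have hval := gz_at k n hk hvk hf i
          refine ⟨?_, ?_⟩
          · rw [sat_Cev k n hk hn hHf (fun h => hi0' (by rw [h]))]
            rw [hval]
            exact ⟨rfl, by simp⟩
          · rw [sat_CuS k n hk hn hHf, hval]
            exact ⟨rfl, rfl⟩
        · -- clauseF
          refine sat_conjL.mpr ?_
          intro φ hφ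
          simp only [List.mem_map, List.mem_finRange, true_and] at hφ
          obtain ⟨ℓ, rfl⟩ := hφ
          refine ⟨((j, Sum.inr ℓ), (0 : Gk k)), ⟨?_, ?_⟩, ?_⟩
          · -- unE conjuncts
            refine sat_conjL.mpr ?_
            intro ψ hψ
            simp only [List.mem_map, List.mem_filter, List.mem_finRange, true_and] at hψ
            obtain ⟨i, hiℓ, rfl⟩ := hψ
            have hiℓ' : i ≠ ℓ := by simpa using hiℓ
            rw [sat_CuE k n hk hn hHf (Or.inl hiℓ')]
            rw [Function.update_self]
            exact ⟨rfl, rfl⟩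
          · -- big clause
            rw [sat_Cbig k n hk hn hHf]
            refine ⟨by rw [Function.update_self], fun i hi => ?_, ?_⟩
            · have hiℓ : i ≠ ℓ := (Finset.mem_erase.mp hi).1
              rw [Function.update_of_ne (fun h => hiℓ (μv_inj k h))]
              rw [gz_at k n hk hvk hf i]
            · rw [Function.update_self]
              have : ∀ i ∈ Finset.univ.erase ℓ,
                  ((Function.update (gz k n hk v hvk j f) (μv k v ℓ)
                    ((j, Sum.inr ℓ), (0 : Gk k))) (μv k v i)).2 = 0 := by
                intro i hi
                have hiℓ : i ≠ ℓ := (Finset.mem_erase.mp hi).1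
                rw [Function.update_of_ne (fun h => hiℓ (μv_inj k h))]
                rw [gz_at k n hk hvk hf i]
              rw [Finset.sum_congr rfl this]
              simp
          · -- tail: CuE ℓ ℓ at the last copy
            rw [sat_CuE k n hk hn hHf (Or.inr (by apply Fin.ext; simp [jIdx]))]
            rw [Function.update_self]
            exact ⟨rfl, rfl⟩
  | succ r ih =>
      intro hr v hv f hf
      have hvk : v < k := by omega
      set j := jIdx k n hn (r+1) with hj
      refine ⟨?_, ?_⟩
      · rw [sat_CuS k n hk hn hHf, hf]
        exact ⟨rfl, rfl⟩
      · refine sat_exsL.mpr ⟨gz k n hk v hvk j f, fun s hs => gz_off k n hk hvk j f hs, ?_, ?_⟩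
        · refine sat_conjL.mpr ?_
          intro φ hφ
          simp only [List.mem_map, List.mem_filter, List.mem_finRange, true_and] at hφ
          obtain ⟨i, hi0, rfl⟩ := hφ
          have hi0' : i.1 ≠ 0 := by simpa using hi0
          have hval := gz_at k n hk hvk hf i
          refine ⟨?_, ?_⟩
          · rw [sat_Cev k n hk hn hHf (fun h => hi0' (by rw [h]))]
            rw [hval]
            exact ⟨rfl, by simp⟩
          · rw [sat_CuS k n hk hn hHf, hval]
            exact ⟨rfl, rfl⟩
        · refine sat_conjL.mpr ?_
          intro φ hφ
          simp only [List.mem_map, List.mem_finRange, true_and] at hφ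
          obtain ⟨ℓ, rfl⟩ := hφ
          refine ⟨((j, Sum.inr ℓ), (0 : Gk k)), ⟨?_, ?_⟩, ?_⟩
          · refine sat_conjL.mpr ?_
            intro ψ hψ
            simp only [List.mem_map, List.mem_filter, List.mem_finRange, true_and] at hψ
            obtain ⟨i, hiℓ, rfl⟩ := hψ
            have hiℓ' : i ≠ ℓ := by simpa using hiℓ
            rw [sat_CuE k n hk hn hHf (Or.inl hiℓ')]
            rw [Function.update_self]
            exact ⟨rfl, rfl⟩
          · rw [sat_Cbig k n hk hn hHf]
            refine ⟨by rw [Function.update_self], fun i hi => ?_, ?_⟩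
            · have hiℓ : i ≠ ℓ := (Finset.mem_erase.mp hi).1
              rw [Function.update_of_ne (fun h => hiℓ (μv_inj k h))]
              rw [gz_at k n hk hvk hf i]
            · rw [Function.update_self]
              have : ∀ i ∈ Finset.univ.erase ℓ,
                  ((Function.update (gz k n hk v hvk j f) (μv k v ℓ)
                    ((j, Sum.inr ℓ), (0 : Gk k))) (μv k v i)).2 = 0 := by
                intro i hi
                have hiℓ : i ≠ ℓ := (Finset.mem_erase.mp hi).1
                rw [Function.update_of_ne (fun h => hiℓ (μv_inj k h))]
                rw [gz_at k n hk hvk hf i]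
              rw [Finset.sum_congr rfl this]
              simp
          · -- tail: linking existential
            have hmm' : μv k v ℓ ≠ (if μv k v ℓ = 0 then 1 else 0) := (mprime_ne).symm
            refine ⟨((jIdx k n hn r, Sum.inl (⟨0, hk⟩ : Fin k)), (0 : Gk k)), ?_, ?_⟩
            · rw [sat_Clink k n hk hn hHf (jIdx_succ_lt k n hn hr)]
              simp only [Function.update_of_ne hmm', Function.update_self]
              refine ⟨by trivial, ?_, by simp⟩
              rw [succIdx_jIdx k n hn hr]
            · refine ih (by omega) _ (by split_ifs <;> omega) _ ?_
              rw [Function.update_self]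

end S16d


section S16e

variable (k n : ℕ) (hk : 0 < k) (hn : 0 < n)
variable {Hf : Constraint (Fin n × Vk k) (Gk k) → Set (Gk k)}

local notation "MM" => mkXorStruct (Fin n × Vk k) (Gk k) (chainF k n hk hn) Hf

variable (hHf : ∀ C ∈ chainF k n hk hn, C.H ≠ ODD k → Hf C = C.H)

include hHf

lemma sound_core (hk3 : 3 ≤ k) (j : Fin n) {v : ℕ} (hv : v < 2)
    (f : ℕ → (Fin n × Vk k) × Gk k)
    (tail : Fin k → ℕ → Fml (xorSig (Fin n × Vk k) (Gk k) (chainF k n hk hn)))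
    (htail : ∀ ℓ : Fin k, ∀ f' : ℕ → (Fin n × Vk k) × Gk k,
      Fml.Sat MM f' (tail ℓ (μv k v ℓ)) →
      (∀ i : Fin k, i ≠ ℓ → (f' (μv k v ℓ)).2 i = 0) → (f' (μv k v ℓ)).2 ℓ = 0)
    (hsat : Fml.Sat MM f (.and (atomF k n hk hn v (CuS k n j ⟨0, hk⟩) (fun _ => v))
      (exsL (slotsL k v) (.and (sPart k n hk hn j v) (clauseF k n hk hn j v tail))))) :
    (∑ i, (f v).2 i) = 0 := by
  obtain ⟨h0, hex⟩ := hsat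
  rw [sat_CuS k n hk hn hHf] at h0
  obtain ⟨g, hgoff, hsp, hcl⟩ := sat_exsL.mp hex
  have hgv : g v = f v := hgoff v (fun h => ((mem_slotsL k).mp h).2 rfl)
  have hS : ∀ i : Fin k, i.1 ≠ 0 →
      ((g (μv k v i)).1 = (j, Sum.inl i) ∧ (∑ m, (g (μv k v i)).2 m) = 0 ∧
        (g (μv k v i)).2 i = 0) := by
    intro i hi
    have hmem : (Fml.and (atomF k n hk hn (μv k v i) (Cev k n j i) (fun _ => μv k v i))
        (atomF k n hk hn (μv k v i) (CuS k n j i) (fun _ => μv k v i))) ∈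
        ((List.finRange k).filter (fun i => i.1 ≠ 0)).map (fun i =>
          Fml.and (atomF k n hk hn (μv k v i) (Cev k n j i) (fun _ => μv k v i))
            (atomF k n hk hn (μv k v i) (CuS k n j i) (fun _ => μv k v i))) :=
      List.mem_map.mpr ⟨i, List.mem_filter.mpr ⟨List.mem_finRange i, by simpa using hi⟩, rfl⟩
    obtain ⟨h1, h2⟩ := sat_conjL.mp hsp _ hmem
    rw [sat_Cev k n hk hn hHf (fun h => hi (by rw [h]))] at h1
    rw [sat_CuS k n hk hn hHf] at h2
    exact ⟨h1.1, h1.2, h2.2⟩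
  have hL : ∀ ℓ : Fin k, (∑ i ∈ Finset.univ.erase ℓ, ((g (μv k v i)).2) ℓ) = 0 := by
    intro ℓ
    have hmem : (Fml.ex (μv k v ℓ) (.and (.and
        (conjL (μv k v ℓ) (((List.finRange k).filter (fun i => i ≠ ℓ)).map (fun i =>
          atomF k n hk hn (μv k v ℓ) (CuE k n j ℓ i) (fun _ => μv k v ℓ))))
        (atomF k n hk hn (μv k v ℓ) (Cbig k n j ℓ) (bigμ k n v (μv k v ℓ))))
        (tail ℓ (μv k v ℓ)))) ∈ (List.finRange k).map (fun ℓ =>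
          Fml.ex (μv k v ℓ) (.and (.and
        (conjL (μv k v ℓ) (((List.finRange k).filter (fun i => i ≠ ℓ)).map (fun i =>
          atomF k n hk hn (μv k v ℓ) (CuE k n j ℓ i) (fun _ => μv k v ℓ))))
        (atomF k n hk hn (μv k v ℓ) (Cbig k n j ℓ) (bigμ k n v (μv k v ℓ))))
        (tail ℓ (μv k v ℓ)))) :=
      List.mem_map.mpr ⟨ℓ, List.mem_finRange ℓ, rfl⟩
    obtain ⟨y, ⟨hunE, hbig⟩, htl⟩ := sat_conjL.mp hcl _ hmem
    have hyc : ∀ i : Fin k, i ≠ ℓ → y.2 i = 0 := by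
      intro i hi
      have hmem2 : (atomF k n hk hn (μv k v ℓ) (CuE k n j ℓ i) (fun _ => μv k v ℓ)) ∈
          ((List.finRange k).filter (fun i => i ≠ ℓ)).map (fun i =>
            atomF k n hk hn (μv k v ℓ) (CuE k n j ℓ i) (fun _ => μv k v ℓ)) :=
        List.mem_map.mpr ⟨i, List.mem_filter.mpr ⟨List.mem_finRange i, by simpa using hi⟩, rfl⟩
      have h3 := sat_conjL.mp hunE _ hmem2
      rw [sat_CuE k n hk hn hHf (Or.inl hi)] at h3
      simpa [Function.update_self] using h3.2
    have hyℓ : y.2 ℓ = 0 := by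
      have := htail ℓ (Function.update g (μv k v ℓ) y) htl
        (fun i hi => by simpa [Function.update_self] using hyc i hi)
      simpa [Function.update_self] using this
    rw [sat_Cbig k n hk hn hHf] at hbig
    obtain ⟨hb1, hb2, hb3⟩ := hbig
    have hrepl : ∀ i ∈ Finset.univ.erase ℓ,
        ((Function.update g (μv k v ℓ) y) (μv k v i)).2 = (g (μv k v i)).2 := by
      intro i hi
      rw [Function.update_of_ne (fun h => (Finset.mem_erase.mp hi).1 (μv_inj k h))]
    rw [Finset.sum_congr rfl hrepl, Function.update_self] at hb3
    rw [Pi.add_apply, hyℓ, zero_add, Finset.sum_apply] at hb3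
    exact hb3
  have hdiag : ∀ ℓ : Fin k, (g (μv k v ℓ)).2 ℓ = 0 := by
    intro ℓ
    rcases eq_or_ne ℓ.1 0 with h | h
    · have hℓ : ℓ = (⟨0, hk⟩ : Fin k) := Fin.ext h
      rw [hℓ, μv_zero k hk v, hgv]
      exact h0.2
    · exact (hS ℓ h).2.2
  have hall : ∀ ℓ : Fin k, (∑ i, (g (μv k v i)).2 ℓ) = 0 := by
    intro ℓ
    have h1 : (∑ i ∈ Finset.univ.erase ℓ, (g (μv k v i)).2 ℓ)
        = ∑ i : Fin k, (g (μv k v i)).2 ℓ :=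
      Finset.sum_erase (f := fun i => (g (μv k v i)).2 ℓ) Finset.univ (hdiag ℓ)
    rw [← h1]
    exact hL ℓ
  have hswap : (∑ i : Fin k, ∑ ℓ : Fin k, (g (μv k v i)).2 ℓ) = 0 := by
    rw [Finset.sum_comm]
    exact Finset.sum_eq_zero (fun ℓ _ => hall ℓ)
  have hsingle : (∑ i : Fin k, ∑ ℓ : Fin k, (g (μv k v i)).2 ℓ)
      = ∑ ℓ : Fin k, (g (μv k v (⟨0, hk⟩ : Fin k))).2 ℓ := by
    refine Finset.sum_eq_single_of_mem _ (Finset.mem_univ _) ?_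
    intro i _ hi
    exact (hS i (fun h => hi (Fin.ext h))).2.1
  rw [hsingle, μv_zero k hk v, hgv] at hswap
  exact hswap

lemma soundSat (hk3 : 3 ≤ k) : ∀ r, r ≤ n - 1 → ∀ v, v < 2 →
    ∀ f : ℕ → (Fin n × Vk k) × Gk k,
    Fml.Sat MM f (EvenF k n hk hn r v) → (∑ i, (f v).2 i) = 0 := by
  intro r
  induction r with
  | zero =>
      intro _ v hv f hsat
      refine sound_core k n hk hn hHf hk3 (jIdx k n hn 0) hv f _ ?_ hsat
      intro ℓ f' htl _
      rw [sat_CuE k n hk hn hHf (Or.inr (by apply Fin.ext; simp [jIdx]))] at htl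
      exact htl.2
  | succ r ih =>
      intro hr v hv f hsat
      refine sound_core k n hk hn hHf hk3 (jIdx k n hn (r+1)) hv f _ ?_ hsat
      intro ℓ f' htl hcoords
      obtain ⟨x', hlink, heven⟩ := htl
      rw [sat_Clink k n hk hn hHf (jIdx_succ_lt k n hn hr)] at hlink
      have hmm' : μv k v ℓ ≠ (if μv k v ℓ = 0 then 1 else 0) := mprime_ne.symm
      have hIH := ih (by omega) _ (by split_ifs <;> omega) _ heven
      rw [Function.update_self] at hIH
      have hσ := hlink.2.2
      simp only [Function.update_of_ne hmm', Function.update_self] at hσ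
      have hsum : (∑ i, (f' (μv k v ℓ)).2 i) + (∑ i, x'.2 i) = 0 := by
        rw [← Finset.sum_add_distrib]
        exact hσ
      have hσf : (∑ i, (f' (μv k v ℓ)).2 i) = 0 := by
        rw [hIH, add_zero] at hsum
        exact hsum
      have hsingle : (∑ i, (f' (μv k v ℓ)).2 i) = (f' (μv k v ℓ)).2 ℓ :=
        Finset.sum_eq_single_of_mem _ (Finset.mem_univ _) (fun b _ hb => hcoords b hb)
      rw [hsingle] at hσf
      exact hσf

end S16e


section S16f

variable (k n : ℕ) (hk : 0 < k) (hn : 0 < n)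

lemma mem_vars_atomF {d : ℕ} {C : Constraint (Fin n × Vk k) (Gk k)}
    {μ : Fin n × Vk k → ℕ} {i : ℕ} (h : i ∈ (atomF k n hk hn d C μ).vars) :
    i = d ∨ ∃ w ∈ C.vars, i = μ w := by
  rw [atomF] at h
  split at h
  · simp only [Fml.vars, Finset.mem_image, Finset.mem_univ, true_and] at h
    obtain ⟨m, rfl⟩ := h
    exact Or.inr ⟨C.vars.get m, C.vars.get_mem _, rfl⟩
  · simp [Fml.vars] at h
    exact Or.inl h

lemma depth_atomF {d : ℕ} {C : Constraint (Fin n × Vk k) (Gk k)}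
    {μ : Fin n × Vk k → ℕ} : (atomF k n hk hn d C μ).depth = 0 := by
  rw [atomF]; split <;> rfl

lemma vars_sPart {j : Fin n} {v i : ℕ} (hv : v < k)
    (h : i ∈ (sPart k n hk hn j v).vars) : i < k := by
  rcases mem_vars_conjL h with rfl | ⟨φ, hφ, hi⟩
  · exact hv
  · obtain ⟨b, _, rfl⟩ := List.mem_map.mp hφ
    simp only [Fml.vars, Finset.mem_union] at hi
    rcases hi with h' | h' <;>
      rcases mem_vars_atomF k n hk hn h' with rfl | ⟨w, _, rfl⟩ <;>
      exact μv_lt k hv b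

lemma vars_clauseF {j : Fin n} {v i : ℕ} (hv : v < k)
    {tail : Fin k → ℕ → Fml (xorSig (Fin n × Vk k) (Gk k) (chainF k n hk hn))}
    (htail : ∀ ℓ : Fin k, ∀ i' ∈ (tail ℓ (μv k v ℓ)).vars, i' < k)
    (h : i ∈ (clauseF k n hk hn j v tail).vars) : i < k := by
  rcases mem_vars_conjL h with rfl | ⟨φ, hφ, hi⟩
  · exact hv
  · obtain ⟨ℓ, _, rfl⟩ := List.mem_map.mp hφ
    simp only [Fml.vars, Finset.mem_insert, Finset.mem_union] at hi
    rcases hi with rfl | ((h' | h') | h')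
    · exact μv_lt k hv ℓ
    · rcases mem_vars_conjL h' with rfl | ⟨ψ, hψ, hi'⟩
      · exact μv_lt k hv ℓ
      · obtain ⟨b, _, rfl⟩ := List.mem_map.mp hψ
        rcases mem_vars_atomF k n hk hn hi' with rfl | ⟨w, _, rfl⟩ <;> exact μv_lt k hv ℓ
    · rcases mem_vars_atomF k n hk hn h' with rfl | ⟨w, _, rfl⟩
      · exact μv_lt k hv ℓ
      · rcases w with ⟨j', x⟩
        rcases x with x | x
        · exact μv_lt k hv x
        · exact μv_lt k hv ℓ
    · exact htail ℓ i h'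

lemma vars_EvenF (hk3 : 3 ≤ k) : ∀ r v, v < 2 → ∀ i ∈ (EvenF k n hk hn r v).vars, i < k := by
  intro r
  induction r with
  | zero =>
      intro v hv i hi
      have hvk : v < k := by omega
      simp only [EvenF, Fml.vars, Finset.mem_union] at hi
      rcases hi with h | h
      · rcases mem_vars_atomF k n hk hn h with rfl | ⟨w, _, rfl⟩ <;> exact hvk
      · rcases mem_vars_exsL h with h' | h'
        · exact ((mem_slotsL k).mp h').1
        · simp only [Fml.vars, Finset.mem_union] at h'
          rcases h' with h' | h'
          · exact vars_sPart k n hk hn hvk h'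
          · refine vars_clauseF k n hk hn hvk ?_ h'
            intro ℓ i' hi'
            rcases mem_vars_atomF k n hk hn hi' with rfl | ⟨w, _, rfl⟩ <;>
              exact μv_lt k hvk ℓ
  | succ r ih =>
      intro v hv i hi
      have hvk : v < k := by omega
      simp only [EvenF, Fml.vars, Finset.mem_union] at hi
      rcases hi with h | h
      · rcases mem_vars_atomF k n hk hn h with rfl | ⟨w, _, rfl⟩ <;> exact hvk
      · rcases mem_vars_exsL h with h' | h'
        · exact ((mem_slotsL k).mp h').1
        · simp only [Fml.vars, Finset.mem_union] at h'
          rcases h' with h' | h'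
          · exact vars_sPart k n hk hn hvk h'
          · refine vars_clauseF k n hk hn hvk ?_ h'
            intro ℓ i' hi'
            simp only [Fml.vars, Finset.mem_insert, Finset.mem_union] at hi'
            rcases hi' with rfl | (h'' | h'')
            · split_ifs <;> omega
            · rcases mem_vars_atomF k n hk hn h'' with rfl | ⟨⟨j', x | x⟩, _, rfl⟩
              · exact μv_lt k hvk ℓ
              · show (if μv k v ℓ = 0 then 1 else 0) < k
                split_ifs <;> omega
              · exact μv_lt k hvk ℓ
            · exact ih _ (by split_ifs <;> omega) _ h''

lemma fv_EvenF (hk3 : 3 ≤ k) (r v : ℕ) (hv : v < 2) :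
    ∀ i ∈ (EvenF k n hk hn r v).freeVars, i = v := by
  have hvk : v < k := by omega
  have hbody : ∀ (j : Fin n)
      (tail : Fin k → ℕ → Fml (xorSig (Fin n × Vk k) (Gk k) (chainF k n hk hn))),
      (∀ ℓ : Fin k, ∀ i' ∈ (tail ℓ (μv k v ℓ)).vars, i' < k) →
      ∀ i ∈ (Fml.and (sPart k n hk hn j v) (clauseF k n hk hn j v tail)).vars, i < k := by
    intro j tail htail i hi
    simp only [Fml.vars, Finset.mem_union] at hi
    rcases hi with h | h
    · exact vars_sPart k n hk hn hvk h
    · exact vars_clauseF k n hk hn hvk htail h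
  cases r with
  | zero =>
      intro i hi
      simp only [EvenF, Fml.freeVars, Finset.mem_union] at hi
      rcases hi with h | h
      · rcases mem_vars_atomF k n hk hn (freeVars_subset_vars _ h) with rfl | ⟨w, _, rfl⟩ <;> rfl
      · obtain ⟨hmem, hnot⟩ := mem_freeVars_exsL h
        have hik : i < k := hbody _ _ (fun ℓ i' hi' => by
            rcases mem_vars_atomF k n hk hn hi' with rfl | ⟨w, _, rfl⟩ <;> exact μv_lt k hvk ℓ)
          i (freeVars_subset_vars _ hmem)
        by_contra hne
        exact hnot ((mem_slotsL k).mpr ⟨hik, hne⟩)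
  | succ r =>
      intro i hi
      simp only [EvenF, Fml.freeVars, Finset.mem_union] at hi
      rcases hi with h | h
      · rcases mem_vars_atomF k n hk hn (freeVars_subset_vars _ h) with rfl | ⟨w, _, rfl⟩ <;> rfl
      · obtain ⟨hmem, hnot⟩ := mem_freeVars_exsL h
        have hik : i < k := hbody _ _ (fun ℓ i' hi' => by
            simp only [Fml.vars, Finset.mem_insert, Finset.mem_union] at hi'
            rcases hi' with rfl | (h'' | h'')
            · split_ifs <;> omega
            · rcases mem_vars_atomF k n hk hn h'' with rfl | ⟨⟨j', x | x⟩, _, rfl⟩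
              · exact μv_lt k hvk ℓ
              · show (if μv k v ℓ = 0 then 1 else 0) < k
                split_ifs <;> omega
              · exact μv_lt k hvk ℓ
            · exact vars_EvenF k n hk hn hk3 r _ (by split_ifs <;> omega) _ h'')
          i (freeVars_subset_vars _ hmem)
        by_contra hne
        exact hnot ((mem_slotsL k).mpr ⟨hik, hne⟩)

lemma depth_sPart {j : Fin n} {v : ℕ} : (sPart k n hk hn j v).depth = 0 := by
  refine Nat.le_zero.mp (depth_conjL_le ?_)
  intro φ hφ
  obtain ⟨b, _, rfl⟩ := List.mem_map.mp hφ
  simp [Fml.depth, depth_atomF]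

lemma depth_clauseF {j : Fin n} {v : ℕ}
    {tail : Fin k → ℕ → Fml (xorSig (Fin n × Vk k) (Gk k) (chainF k n hk hn))} {D : ℕ}
    (htail : ∀ ℓ : Fin k, (tail ℓ (μv k v ℓ)).depth ≤ D) :
    (clauseF k n hk hn j v tail).depth ≤ D + 1 := by
  refine depth_conjL_le ?_
  intro φ hφ
  obtain ⟨ℓ, _, rfl⟩ := List.mem_map.mp hφ
  simp only [Fml.depth]
  have h1 : (conjL (μv k v ℓ) (((List.finRange k).filter (fun i => i ≠ ℓ)).map (fun i =>
      atomF k n hk hn (μv k v ℓ) (CuE k n j ℓ i) (fun _ => μv k v ℓ)))).depth ≤ D := by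
    refine depth_conjL_le ?_
    intro ψ hψ
    obtain ⟨b, _, rfl⟩ := List.mem_map.mp hψ
    rw [depth_atomF]
    exact Nat.zero_le _
  have h2 := htail ℓ
  have h3 : (atomF k n hk hn (μv k v ℓ) (Cbig k n j ℓ) (bigμ k n v (μv k v ℓ))).depth = 0 :=
    depth_atomF k n hk hn
  omega

lemma length_slotsL (v : ℕ) : (slotsL k v).length ≤ k := by
  calc (slotsL k v).length ≤ (List.range k).length := List.length_filter_le _ _
  _ = k := List.length_range (n := k)

lemma depth_EvenF : ∀ r v, (EvenF k n hk hn r v).depth ≤ (k + 2) * (r + 1) := by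
  intro r
  induction r with
  | zero =>
      intro v
      simp only [EvenF, Fml.depth, depth_atomF, depth_exsL, depth_sPart]
      have h2 : (clauseF k n hk hn (jIdx k n hn 0) v (fun ℓ m =>
          atomF k n hk hn m (CuE k n (jIdx k n hn 0) ℓ ℓ) (fun _ => m))).depth ≤ 0 + 1 :=
        depth_clauseF k n hk hn (fun ℓ => by rw [depth_atomF])
      have h3 := length_slotsL k v
      omega
  | succ r ih =>
      intro v
      simp only [EvenF, Fml.depth, depth_atomF, depth_exsL, depth_sPart]
      have h2 : (clauseF k n hk hn (jIdx k n hn (r+1)) v (fun ℓ m =>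
          Fml.ex (if m = 0 then 1 else 0)
            (.and (atomF k n hk hn m (Clink k n hk (jIdx k n hn (r+1)) ℓ)
              (linkμ k n m (if m = 0 then 1 else 0)))
            (EvenF k n hk hn r (if m = 0 then 1 else 0))))).depth
          ≤ ((k + 2) * (r + 1) + 1) + 1 :=
        depth_clauseF k n hk hn (fun ℓ => by
          simp only [Fml.depth, depth_atomF]
          have := ih (if μv k v ℓ = 0 then 1 else 0)
          omega)
      have h3 := length_slotsL k v
      have h4 : (k + 2) * (r + 1 + 1) = (k + 2) * (r + 1) + (k + 2) := by ring
      omega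

end S16f


/-- Lemma 27 of the paper. For every odd `k ≥ 3` there is a constant
`c` such that for every `n ≥ 1` there is a sentence `φ` of `L^k` with quantifier depth
at most `c * n` distinguishing `𝒞 = 𝒜(𝓕)` from `𝒟 = ℬ(𝓕)`, where `𝓕` is the
chained formula with `n` links. -/
theorem statement_16 (k : ℕ) (hk : 3 ≤ k) (hkodd : Odd k) :
    ∃ c : ℕ, 0 < c ∧ ∀ n : ℕ, ∀ hn : 0 < n,
      ∃ φ : Fml (xorSig (Fin n × Vk k) (Gk k) (chainF k n (by omega) hn)),
        UsesVars k φ ∧ IsSentence φ ∧ φ.depth ≤ c * n ∧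
        Distinguishes
          (Astruct (Fin n × Vk k) (Gk k) (chainF k n (by omega) hn)
            (chainD k n (by omega) hn))
          (Bstruct (Fin n × Vk k) (Gk k) (chainF k n (by omega) hn)) φ := by
  have hk0 : 0 < k := by omega
  refine ⟨2 * (k + 2) + 2, by omega, fun n hn => ?_⟩
  refine ⟨phiF k n hk0 hn, ?_, ?_, ?_, ?_, ?_⟩
  · -- UsesVars
    intro i hi
    simp only [phiF, Fml.vars, Finset.mem_insert, Finset.mem_union] at hi
    rcases hi with rfl | (h | h)
    · omega
    · rcases mem_vars_atomF k n hk0 hn h with rfl | ⟨w, _, rfl⟩ <;> omega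
    · exact vars_EvenF k n hk0 hn hk (n - 1) 0 (by omega) i h
  · -- IsSentence
    rw [IsSentence, Finset.eq_empty_iff_forall_notMem]
    intro i hi
    simp only [phiF, Fml.freeVars, Finset.mem_erase, Finset.mem_union] at hi
    obtain ⟨hne, h | h⟩ := hi
    · rcases mem_vars_atomF k n hk0 hn (freeVars_subset_vars _ h) with rfl | ⟨w, _, rfl⟩ <;>
        exact hne rfl
    · exact hne (fv_EvenF k n hk0 hn hk (n - 1) 0 (by omega) i h)
  · -- depth bound
    simp only [phiF, Fml.depth, depth_atomF]
    have h1 := depth_EvenF k n hk0 hn (n - 1) 0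
    have h2 : n - 1 + 1 = n := by omega
    rw [h2] at h1
    have h3 : (k + 2) * n + n ≤ (2 * (k + 2) + 2) * n := by
      have : (2 * (k + 2) + 2) * n = (k + 2) * n + ((k + 3) * n + n) := by ring
      omega
    have h4 : 1 ≤ n := hn
    omega
  · -- 𝒜 ⊨ φ
    intro f
    have hHfA : ∀ C ∈ chainF k n hk0 hn, C.H ≠ ODD k →
        hatH (chainD k n hk0 hn) C = C.H := fun C _ hne => hatH_of_ne k n hk0 hn hne
    have hj : jIdx k n hn (n - 1) = (⟨0, hn⟩ : Fin n) := by
      apply Fin.ext; simp [jIdx]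
    refine ⟨((jIdx k n hn (n - 1), Sum.inl (⟨0, hk0⟩ : Fin k)), (0 : Gk k)), ?_, ?_⟩
    · rw [sat_atomF k n hk0 hn (memF_CC0 k n hk0 hn)]
      constructor
      · intro w hw
        simp only [CC0, List.mem_singleton] at hw
        subst hw
        rw [Function.update_self, hj]
        rfl
      · rw [hatH_CC0 k n hk0 hn]
        have : ((CC0 k n hk0 hn).vars.map (fun w =>
            ((Function.update f 0 ((jIdx k n hn (n - 1), Sum.inl (⟨0, hk0⟩ : Fin k)),
              (0 : Gk k))) (0 : ℕ)).2)).sum = (0 : Gk k) := by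
          simp [CC0, Function.update_self]
        simp only [CC0, List.map_cons, List.map_nil, List.sum_cons, List.sum_nil,
          Function.update_self, add_zero]
        exact zero_not_odd k
    · exact zeroSat k n hk0 hn hHfA hk (n - 1) (by omega) 0 (by omega) _
        (Function.update_self _ _ _)
  · -- 𝒟 ⊭ φ
    intro hs
    have hsat := hs (fun _ => (((⟨0, hn⟩ : Fin n), Sum.inl (⟨0, hk0⟩ : Fin k)), (0 : Gk k)))
    obtain ⟨a, ha1, ha2⟩ := hsat
    rw [sat_atomF k n hk0 hn (memF_CC0 k n hk0 hn)] at ha1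
    have hodd : (∑ i, a.2 i) = 1 := by
      have := ha1.2
      simp only [CC0, List.map_cons, List.map_nil, List.sum_cons, List.sum_nil,
        Function.update_self, add_zero] at this
      simpa [ODD] using this
    have hzero : (∑ i, a.2 i) = 0 := by
      have := soundSat k n hk0 hn (Hf := fun C => C.H) (fun C _ _ => rfl) hk
        (n - 1) (le_refl _) 0 (by omega) _ ha2
      simpa [Function.update_self] using this
    rw [hodd] at hzero
    exact absurd hzero (by decide)


end QVT
end

section
/- Let k ≥ 3 be odd and let ℓ ∈ {1,…,k}. Suppose g_i ∈ Z_2^k for i ∈ {1,…,k}∖{ℓ} satisfy: g_i[i] = 0 for every i ≠ ℓ; if ℓ ≠ 1 then g_1 ∈ ODD; g_i ∈ EVEN for every i ∉ {1, ℓ}; and (Σ_{i≠ℓ} g_i)[ℓ] = 1. Define g_ℓ := 1̲ + Σ_{i≠ℓ} g_i. Then: g_ℓ[ℓ] = 0; g_1 ∈ ODD and g_i ∈ EVEN for every i ≠ 1 (in particular g_ℓ ∈ EVEN if ℓ ≠ 1 and g_ℓ ∈ ODD if ℓ = 1); and for every t ∈ {1,…,k}, (0̲_t + Σ_{i ∈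 {1,…,k}∖{t}} g_i)[t] = 0. Hence the assignment sending s_i ↦ g_i for all i ∈ {1,…,k} and e_t ↦ 0̲_t for all t ∈ {1,…,k} satisfies every clause of the formula F except possibly the clauses e_t[t] = 0. -/
/-- the computation underlying Lemma 28 of the paper, base case.
Given values `g_i` (`i ≠ ℓ`) satisfying the indicated clauses of `F`, the element
`g_ℓ := 1̲ + Σ_{i ≠ ℓ} g_i` satisfies `g_ℓ[ℓ] = 0`; moreover `g_1 ∈ ODD`,
`g_i ∈ EVEN` for `i ≠ 1`, and `(0̲_t + Σ_{i ≠ t} g_i)[t] = 0` for every `t`; hence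
`s_i ↦ g_i`, `e_t ↦ 0̲_t` satisfies every clause of `F` except possibly the clauses
`e_t[t] = 0`. -/
theorem statement_19 (k : ℕ) (hk : 3 ≤ k) (hkodd : Odd k) (ℓ : Fin k)
    (g : Fin k → Fin k → ZMod 2)
    (hdiag : ∀ i : Fin k, i ≠ ℓ → g i i = 0)
    (hodd1 : ℓ ≠ ⟨0, by omega⟩ → ∑ j, g ⟨0, by omega⟩ j = 1)
    (heven : ∀ i : Fin k, i ≠ ⟨0, by omega⟩ → i ≠ ℓ → ∑ j, g i j = 0)
    (hsum : ∑ i ∈ Finset.univ.erase ℓ, g i ℓ = 1)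
    (hdef : g ℓ = (fun _ => (1 : ZMod 2)) + ∑ i ∈ Finset.univ.erase ℓ, g i) :
    g ℓ ℓ = 0 ∧
    (∑ j, g ⟨0, by omega⟩ j = 1) ∧
    (∀ i : Fin k, i ≠ ⟨0, by omega⟩ → ∑ j, g i j = 0) ∧
    ∀ t : Fin k,
      ((fun m => if m = t then (1 : ZMod 2) else 0) +
        ∑ i ∈ Finset.univ.erase t, g i) t = 0 := by
  have hk2 : (k : ZMod 2) = 1 := by
    obtain ⟨m, hm⟩ := hkodd
    subst hm
    push_cast
    rw [show ((2:ZMod 2)) = 0 from rfl]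
    ring
  have hdefc : ∀ j, g ℓ j = 1 + ∑ i ∈ Finset.univ.erase ℓ, g i j := by
    intro j
    rw [hdef]
    simp [Finset.sum_apply]
  have h1 : g ℓ ℓ = 0 := by
    rw [hdefc, hsum]; decide
  have hsumℓ : ∑ j, g ℓ j = 1 + ∑ i ∈ Finset.univ.erase ℓ, ∑ j, g i j := by
    simp only [hdefc]
    rw [Finset.sum_add_distrib, Finset.sum_const, Finset.card_univ, Fintype.card_fin,
      Finset.sum_comm]
    congr 1
    simp [nsmul_eq_mul, hk2]
  have htot : ∀ t, ∑ i, g i t = 1 := by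
    intro t
    rw [← Finset.add_sum_erase _ _ (Finset.mem_univ ℓ), hdefc]
    exact (by decide : ∀ x : ZMod 2, 1 + x + x = 1) _
  set z : Fin k := ⟨0, by omega⟩ with hz
  have h2 : ∑ j, g z j = 1 := by
    by_cases hc : ℓ = z
    · rw [← hc, hsumℓ, Finset.sum_eq_zero, add_zero]
      intro i hi
      rw [Finset.mem_erase] at hi
      exact heven i (hc ▸ hi.1) hi.1
    · exact hodd1 hc
  have h3 : ∀ i : Fin k, i ≠ z → ∑ j, g i j = 0 := by
    intro i hi
    by_cases hc : i = ℓ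
    · subst hc
      rw [hsumℓ]
      have hzmem : z ∈ Finset.univ.erase i := Finset.mem_erase.mpr ⟨Ne.symm hi, Finset.mem_univ _⟩
      rw [← Finset.add_sum_erase _ _ hzmem, h2, Finset.sum_eq_zero, add_zero]
      · decide
      · intro j hj
        rw [Finset.mem_erase, Finset.mem_erase] at hj
        exact heven j hj.1 hj.2.1
    · exact heven i hi hc
  refine ⟨h1, h2, h3, ?_⟩
  intro t
  have hgt : g t t = 0 := by
    by_cases hc : t = ℓ
    · rw [hc]; exact h1
    · exact hdiag t hc
  have hst : ∑ i ∈ Finset.univ.erase t, g i t = 1 := by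
    have := htot t
    rw [← Finset.add_sum_erase _ _ (Finset.mem_univ t), hgt, zero_add] at this
    exact this
  simp only [Pi.add_apply, Finset.sum_apply, if_pos rfl, hst]
  decide
end
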